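/- For every integer p ≥ 2, the split graph Q₂(p) satisfies χ_rlid(Q₂(p)) = p + 1 = ω(Q₂(p)) + 1; in particular ω(Q₂(p)) = p. -/

import Mathlib

open SimpleGraph Set

variable {V : Type*}

/-- The closed neighborhood of a vertex. -/
def closedNbhd (G : SimpleGraph V) (v : V) : Set V := insert v (G.neighborSet v)

/-- A (not necessarily proper) coloring `c : V → Fin k` is a relaxed locally identifying coloring
(rlid-coloring) if any two adjacent vertices with distinct closed neighborhoods receive distinct
sets of colors on their closed neighborhoods. -/
def IsRlidColoring (G : SimpleGraph V) {k : ℕ} (c : V → Fin k) : Prop :=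
  ∀ u v : V, G.Adj u v → closedNbhd G u ≠ closedNbhd G v →
    c '' closedNbhd G u ≠ c '' closedNbhd G v

/-- The relaxed locally identifying chromatic number: the least `k` such that `G` admits an
rlid-coloring with `k` colors. -/
noncomputable def rlidChromNum (G : SimpleGraph V) : ℕ :=
  sInf {k : ℕ | ∃ c : V → Fin k, IsRlidColoring G c}

/-- A graph is twin-free if distinct vertices have distinct closed neighborhoods. -/
def TwinFree (G : SimpleGraph V) : Prop :=
  ∀ u v : V, closedNbhd G u = closedNbhd G v → u = v

/-- The split graph `Q₂(p)`: the clique is `{v_1, …, v_p}` (encoded as `Sum.inl i`), the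
independent set is `{s_1, …, s_{p−1}}` (encoded as `Sum.inr j`), and the only edges between
them are `v_i s_i` for `i = 1, …, p−1`. -/
def Q2graph (p : ℕ) : SimpleGraph (Fin p ⊕ Fin (p - 1)) :=
  SimpleGraph.fromRel (fun x y =>
    match x, y with
    | Sum.inl i, Sum.inl j => i ≠ j
    | Sum.inl i, Sum.inr j => (i : ℕ) = (j : ℕ)
    | _, _ => False)

/-! The clique `K = {v₁, …, v_p}` of `Q₂(p)` lies in every closed neighbourhood of a clique vertex,
and `N[v_i] = K ∪ {s_i}` (with `N[v_p] = K`). For an rlid-colouring `c`, comparing `v_i` with `v_p`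
shows `c(s_i) ∉ c(K)`, comparing `v_i` with `v_j` shows that the `c(s_i)` are pairwise distinct, and
comparing `s₁` with `v₁` shows that `c` is not constant on `K`; hence at least `2 + (p - 1)` colours
are needed. Conversely, colouring `v₁` with `0`, the other `v_i` with `1` and each `s_i` with its own
colour `i + 1` is an rlid-colouring. -/

open Function

lemma mem_closedNbhd {G : SimpleGraph V} {v x : V} :
    x ∈ closedNbhd G v ↔ x = v ∨ G.Adj v x :=
  Iff.rfl

namespace Q2graph

variable {p : ℕ}

@[simp]
lemma adj_inl_inl {i i' : Fin p} : (Q2graph p).Adj (.inl i) (.inl i') ↔ i ≠ i' := by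
  simp [Q2graph, fromRel_adj]
  tauto

@[simp]
lemma adj_inl_inr {i : Fin p} {j : Fin (p - 1)} :
    (Q2graph p).Adj (.inl i) (.inr j) ↔ (j : ℕ) = i := by
  simp [Q2graph, fromRel_adj, eq_comm]

@[simp]
lemma adj_inr_inl {i : Fin p} {j : Fin (p - 1)} :
    (Q2graph p).Adj (.inr j) (.inl i) ↔ (j : ℕ) = i := by
  simp [Q2graph, fromRel_adj, eq_comm]

@[simp]
lemma not_adj_inr_inr {j j' : Fin (p - 1)} : ¬ (Q2graph p).Adj (.inr j) (.inr j') := by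
  simp [Q2graph, fromRel_adj]

@[simp]
lemma inl_mem_closedNbhd_inl (i i' : Fin p) : .inl i' ∈ closedNbhd (Q2graph p) (.inl i) := by
  by_cases h : i' = i <;> simp [mem_closedNbhd, h, Ne.symm]

@[simp]
lemma inr_mem_closedNbhd_inl {i : Fin p} {j : Fin (p - 1)} :
    .inr j ∈ closedNbhd (Q2graph p) (.inl i) ↔ (j : ℕ) = i := by
  simp [mem_closedNbhd]

lemma closedNbhd_inl_castLE (j : Fin (p - 1)) :
    closedNbhd (Q2graph p) (.inl (j.castLE (Nat.sub_le p 1))) = insert (.inr j) (range .inl) := by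
  ext (i | j') <;> simp [Fin.val_inj]

lemma closedNbhd_inl_of_le {i : Fin p} (h : p - 1 ≤ i) :
    closedNbhd (Q2graph p) (.inl i) = range .inl := by
  ext (i' | j)
  · simp
  · simpa using (j.isLt.trans_le h).ne

lemma closedNbhd_inr (j : Fin (p - 1)) :
    closedNbhd (Q2graph p) (.inr j) = {.inr j, .inl (j.castLE (Nat.sub_le p 1))} := by
  ext (i | j') <;> simp [mem_closedNbhd, Fin.ext_iff, eq_comm]

section LowerBound

variable {k : ℕ} {c : Fin p ⊕ Fin (p - 1) → Fin k}

lemma apply_inr_notMem_image_inl (hp : 2 ≤ p) (hc : IsRlidColoring (Q2graph p) c)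
    (j : Fin (p - 1)) : c (.inr j) ∉ c '' range .inl := by
  set last : Fin p := ⟨p - 1, by omega⟩
  have hlast : p - 1 ≤ (last : ℕ) := le_rfl
  intro hj
  refine hc (.inl (j.castLE (Nat.sub_le p 1))) (.inl last) ?_ ?_ ?_
  · simp [Fin.ext_iff, last, j.2.ne]
  · rw [closedNbhd_inl_castLE, closedNbhd_inl_of_le hlast]
    simp
  · rw [closedNbhd_inl_castLE, closedNbhd_inl_of_le hlast, image_insert_eq, insert_eq_of_mem hj]

lemma injective_comp_inr (hc : IsRlidColoring (Q2graph p) c) : Injective (c ∘ .inr) := by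
  intro j j' hjj'
  by_contra hne
  refine hc (.inl (j.castLE (Nat.sub_le p 1))) (.inl (j'.castLE (Nat.sub_le p 1))) ?_ ?_ ?_
  · simpa using hne
  · rw [closedNbhd_inl_castLE, closedNbhd_inl_castLE]
    intro h
    have : (.inr j : Fin p ⊕ Fin (p - 1)) ∈ insert (.inr j') (range .inl) :=
      h ▸ mem_insert _ _
    simp [hne] at this
  · rw [closedNbhd_inl_castLE, closedNbhd_inl_castLE, image_insert_eq, image_insert_eq]
    exact congrArg (insert · _) hjj'

lemma exists_apply_inl_ne (hp : 2 ≤ p) (hc : IsRlidColoring (Q2graph p) c) :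
    ∃ i i', c (.inl i) ≠ c (.inl i') := by
  by_contra! hconst
  set j : Fin (p - 1) := ⟨0, by omega⟩
  set i := j.castLE (Nat.sub_le p 1)
  refine hc (.inr j) (.inl i) (by simp [i]) ?_ ?_
  · rw [closedNbhd_inr, closedNbhd_inl_castLE]
    intro h
    have : (.inl ⟨p - 1, by omega⟩ : Fin p ⊕ Fin (p - 1)) ∈ ({.inr j, .inl i} : Set _) :=
      h ▸ mem_insert_of_mem _ (mem_range_self _)
    simp [Fin.ext_iff, i, j] at this
    omega
  · have hK : c '' range .inl = {c (.inl i)} := by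
      ext
      simpa [hconst _ i, eq_comm] using fun _ ↦ ⟨i⟩
    rw [closedNbhd_inr, closedNbhd_inl_castLE, image_insert_eq, image_insert_eq, image_singleton,
      hK]

theorem add_one_le_of_isRlidColoring (hp : 2 ≤ p) (hc : IsRlidColoring (Q2graph p) c) :
    p + 1 ≤ k := by
  classical
  set cliqueColors := Finset.univ.image (c ∘ .inl)
  set pendantColors := Finset.univ.image (c ∘ .inr)
  have hclique : 2 ≤ cliqueColors.card := by
    obtain ⟨i, i', hne⟩ := exists_apply_inl_ne hp hc
    exact Finset.one_lt_card.mpr ⟨_, by simp [cliqueColors], _, by simp [cliqueColors], hne⟩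
  have hpendant : pendantColors.card = p - 1 := by
    simp [pendantColors, Finset.card_image_of_injective _ (injective_comp_inr hc)]
  have hdisj : Disjoint cliqueColors pendantColors := by
    simpa [cliqueColors, pendantColors, Finset.disjoint_left, eq_comm] using
      fun i j h ↦ apply_inr_notMem_image_inl hp hc j ⟨_, mem_range_self i, h⟩
  calc p + 1 ≤ (cliqueColors ∪ pendantColors).card := by
        rw [Finset.card_union_of_disjoint hdisj]; omega
    _ ≤ k := by simpa using Finset.card_le_univ (cliqueColors ∪ pendantColors)

end LowerBound

def rlidColoring (p : ℕ) : Fin p ⊕ Fin (p - 1) → Fin (p + 1)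
  | .inl i => if (i : ℕ) = 0 then 0 else 1
  | .inr j => ⟨j + 2, by have := j.isLt; omega⟩

lemma val_rlidColoring_inl_le_one (i : Fin p) : (rlidColoring p (.inl i) : ℕ) ≤ 1 := by
  simp only [rlidColoring]
  split_ifs <;> simp [Nat.mod_le]

lemma rlidColoring_inl_ne_inr (i : Fin p) (j : Fin (p - 1)) :
    rlidColoring p (.inl i) ≠ rlidColoring p (.inr j) := by
  intro h
  have := val_rlidColoring_inl_le_one i
  rw [h] at this
  simp [rlidColoring] at this

lemma injective_rlidColoring_comp_inr : Injective (rlidColoring p ∘ .inr) := by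
  intro j j' h
  simpa [rlidColoring, Fin.ext_iff] using h

lemma exists_rlidColoring_inl_ne (hp : 2 ≤ p) (i : Fin p) :
    ∃ i', rlidColoring p (.inl i') ≠ rlidColoring p (.inl i) := by
  by_cases hi : (i : ℕ) = 0
  · exact ⟨⟨1, by omega⟩, by simp [rlidColoring, hi, Fin.ext_iff]; omega⟩
  · exact ⟨⟨0, by omega⟩, by simp [rlidColoring, hi, Fin.ext_iff]; omega⟩

lemma rlidColoring_inr_mem_image_closedNbhd_inl_iff {i : Fin p} {j : Fin (p - 1)} :
    rlidColoring p (.inr j) ∈ rlidColoring p '' closedNbhd (Q2graph p) (.inl i) ↔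
      (j : ℕ) = i := by
  constructor
  · rintro ⟨i' | j', hx, hcx⟩
    · exact absurd hcx (rlidColoring_inl_ne_inr i' j)
    · obtain rfl := injective_rlidColoring_comp_inr hcx
      simpa using hx
  · intro h
    exact ⟨.inr j, by simpa using h, rfl⟩

lemma image_closedNbhd_inl_ne_of_lt {i i' : Fin p} (hii' : i ≠ i') (hi : (i : ℕ) < p - 1) :
    rlidColoring p '' closedNbhd (Q2graph p) (.inl i) ≠
      rlidColoring p '' closedNbhd (Q2graph p) (.inl i') := by
  intro h
  have hmem := (rlidColoring_inr_mem_image_closedNbhd_inl_iff (j := ⟨i, hi⟩) (i := i)).mpr rfl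
  rw [h, rlidColoring_inr_mem_image_closedNbhd_inl_iff] at hmem
  exact hii' (Fin.ext hmem)

lemma image_closedNbhd_inl_ne_inr (i : Fin p) (j : Fin (p - 1)) :
    rlidColoring p '' closedNbhd (Q2graph p) (.inl i) ≠
      rlidColoring p '' closedNbhd (Q2graph p) (.inr j) := by
  obtain ⟨i', hi'⟩ :=
    exists_rlidColoring_inl_ne (by have := j.isLt; omega) (j.castLE (Nat.sub_le p 1))
  intro h
  have hmem : rlidColoring p (.inl i') ∈ rlidColoring p '' closedNbhd (Q2graph p) (.inr j) :=
    h ▸ mem_image_of_mem _ (inl_mem_closedNbhd_inl i i')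
  rw [closedNbhd_inr, image_pair] at hmem
  rcases hmem with hmem | hmem
  · exact rlidColoring_inl_ne_inr i' j hmem
  · exact hi' hmem

theorem isRlidColoring_rlidColoring : IsRlidColoring (Q2graph p) (rlidColoring p) := by
  rintro (i | j) (i' | j') hadj -
  · have hii' : i ≠ i' := by simpa using hadj
    by_cases hi : (i : ℕ) < p - 1
    · exact image_closedNbhd_inl_ne_of_lt hii' hi
    · have hi' : (i' : ℕ) < p - 1 := by
        have := Fin.val_ne_of_ne hii'
        omega
      exact (image_closedNbhd_inl_ne_of_lt hii'.symm hi').symm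
  · exact image_closedNbhd_inl_ne_inr i j'
  · exact (image_closedNbhd_inl_ne_inr i' j).symm
  · exact absurd hadj not_adj_inr_inr

lemma card_le_of_isClique {s : Finset (Fin p ⊕ Fin (p - 1))} (hs : (Q2graph p).IsClique s) :
    s.card ≤ p := by
  -- Sending every `s_j` to `v_p` is injective on a clique, as `v_p` has no pendant neighbour.
  let f : Fin p ⊕ Fin (p - 1) → Fin p := Sum.elim id fun j ↦ ⟨p - 1, by have := j.isLt; omega⟩
  have hf : InjOn f s := by
    rintro (i | j) hx (i' | j') hy hxy <;> by_contra hne <;> have hadj := hs hx hy hne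
    · simp_all [f]
    · simp [f, Fin.ext_iff] at hxy hadj
      omega
    · simp [f, Fin.ext_iff] at hxy hadj
      omega
    · simp at hadj
  simpa using Finset.card_le_card_of_injOn f (fun _ _ ↦ Finset.mem_coe.mpr (Finset.mem_univ _)) hf

lemma isClique_range_inl : (Q2graph p).IsClique (range .inl) := by
  rintro _ ⟨i, rfl⟩ _ ⟨i', rfl⟩ hne
  simpa using hne

theorem cliqueNum_eq : (Q2graph p).cliqueNum = p := by
  classical
  apply le_antisymm
  · obtain ⟨s, hs⟩ := (Q2graph p).exists_isNClique_cliqueNum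
    exact hs.card_eq ▸ card_le_of_isClique hs.isClique
  · have hK : (Q2graph p).IsClique
        ((Finset.univ.image Sum.inl : Finset (Fin p ⊕ Fin (p - 1))) : Set _) := by
      simpa using isClique_range_inl
    simpa [Finset.card_image_of_injective _ Sum.inl_injective] using hK.card_le_cliqueNum

end Q2graph

/-- For every `p ≥ 2`, `χ_rlid(Q₂(p)) = p + 1 = ω(Q₂(p)) + 1`, with
`ω(Q₂(p)) = p`. -/
theorem rlid_Q2 (p : ℕ) (hp : 2 ≤ p) :
    rlidChromNum (Q2graph p) = p + 1 ∧ (Q2graph p).cliqueNum = p := by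
  refine ⟨le_antisymm ?_ ?_, Q2graph.cliqueNum_eq⟩
  · exact Nat.sInf_le ⟨_, Q2graph.isRlidColoring_rlidColoring⟩
  · exact le_csInf ⟨_, _, Q2graph.isRlidColoring_rlidColoring⟩
      fun k ⟨_, hc⟩ ↦ Q2graph.add_one_le_of_isRlidColoring hp hc
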